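/- (Maria's inequality) For every positive integer n, [12n + 3/(2(2n+1))]^{-1} < r_n, where r_n = ln( n!·e^n / (√(2πn)·n^n) ). -/

import Mathlib

open Real Nat

/-- `r_n = ln ( n! eⁿ / (√(2πn) nⁿ) )`, the logarithmic error in Stirling's formula. -/
noncomputable def stirlingError (n : ℕ) : ℝ :=
  Real.log ((n ! : ℝ) * Real.exp n / (Real.sqrt (2 * π * n) * (n : ℝ) ^ n))

/-- Lower bound candidate `(4n+2)/(3(4n+1)²) = 1/(12n + 3/(2(2n+1)))`. -/
noncomputable def mariaF (m : ℕ) : ℝ := (4 * m + 2) / (3 * (4 * m + 1) ^ 2)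

lemma mariaF_nonneg (m : ℕ) : 0 ≤ mariaF m := by
  unfold mariaF; positivity

lemma mariaF_le (m : ℕ) : mariaF m ≤ 1 / (m + 1) := by
  unfold mariaF
  rw [div_le_div_iff₀ (by positivity) (by positivity)]
  have hx : (0:ℝ) ≤ (m:ℝ) := Nat.cast_nonneg m
  nlinarith [sq_nonneg ((m:ℝ))]

lemma stirlingError_eq (n : ℕ) (hn : 1 ≤ n) :
    stirlingError n = Real.log (Stirling.stirlingSeq n) - Real.log (Real.sqrt π) := by
  have hn0 : (0:ℝ) < (n:ℝ) := by exact_mod_cast hn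
  have hfac : (0:ℝ) < (n ! : ℝ) := by exact_mod_cast Nat.factorial_pos n
  have harg : ((n ! : ℝ) * Real.exp n / (Real.sqrt (2 * π * n) * (n : ℝ) ^ n))
      = Stirling.stirlingSeq n / Real.sqrt π := by
    rw [Stirling.stirlingSeq]
    rw [show (2 * π * (n:ℝ)) = π * (2 * n) by ring, Real.sqrt_mul pi_pos.le,
      div_pow, Real.exp_one_pow]
    have h1 : (0:ℝ) < Real.sqrt (2 * n) := Real.sqrt_pos.mpr (by positivity)
    have h2 : (0:ℝ) < Real.exp 1 ^ n := by positivity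
    have h4 : (0:ℝ) < Real.sqrt π := Real.sqrt_pos.mpr pi_pos
    have h5 : (0:ℝ) < (n:ℝ) ^ n := by positivity
    have hexp : (0:ℝ) < Real.exp (n:ℝ) := Real.exp_pos _
    field_simp
  have hpos : (0:ℝ) < Stirling.stirlingSeq n := by
    obtain ⟨m, rfl⟩ : ∃ m, n = m + 1 := ⟨n - 1, (Nat.succ_pred_eq_of_pos hn).symm⟩
    exact Stirling.stirlingSeq'_pos m
  rw [stirlingError, harg, Real.log_div hpos.ne' (Real.sqrt_pos.mpr pi_pos).ne']

/-- The key strict termwise inequality. -/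
lemma mariaF_succ_lt (m : ℕ) :
    mariaF (m + 1) - mariaF (m + 2) <
      Real.log (Stirling.stirlingSeq (m + 1)) - Real.log (Stirling.stirlingSeq (m + 2)) := by
  have hs := Stirling.log_stirlingSeq_diff_hasSum m
  have h2 := sum_le_hasSum (Finset.range 2) (fun k _ => by positivity) hs
  refine lt_of_lt_of_le ?_ h2
  rw [Finset.sum_range_succ, Finset.sum_range_one]
  unfold mariaF
  push_cast
  norm_num
  set x : ℝ := (m : ℝ) with hxdef
  have hx : (0:ℝ) ≤ x := Nat.cast_nonneg m
  rw [div_sub_div _ _ (by positivity) (by positivity), inv_eq_one_div, inv_eq_one_div,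
    mul_one_div, mul_one_div, div_add_div _ _ (by positivity) (by positivity),
    div_lt_div_iff₀ (by positivity) (by positivity)]
  ring_nf
  nlinarith [sq_nonneg x, pow_pos (show (0:ℝ) < x + 1 by linarith) 4,
    mul_nonneg (mul_nonneg hx hx) hx, mul_nonneg hx hx]

/-- Weak form of the bound, obtained by telescoping and passing to the limit. -/
lemma mariaF_le_err (m : ℕ) :
    mariaF (m + 1) ≤ Real.log (Stirling.stirlingSeq (m + 1)) - Real.log (Real.sqrt π) := by
  have tendS : Filter.Tendsto (fun K : ℕ => Real.log (Stirling.stirlingSeq (m + 1 + K)))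
      Filter.atTop (nhds (Real.log (Real.sqrt π))) := by
    have h1 : Filter.Tendsto (fun K : ℕ => Stirling.stirlingSeq (K + (m + 1)))
        Filter.atTop (nhds (Real.sqrt π)) :=
      Stirling.tendsto_stirlingSeq_sqrt_pi.comp (Filter.tendsto_add_atTop_nat (m + 1))
    have h2 := ((Real.continuousAt_log (Real.sqrt_pos.mpr pi_pos).ne').tendsto).comp h1
    refine h2.congr fun K => by rw [Function.comp_apply, Nat.add_comm]
  have tendF : Filter.Tendsto (fun K : ℕ => mariaF (m + 1 + K)) Filter.atTop (nhds 0) := by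
    refine squeeze_zero (fun K => mariaF_nonneg _) (fun K => ?_)
      tendsto_one_div_add_atTop_nhds_zero_nat
    refine (mariaF_le _).trans ?_
    rw [div_le_div_iff₀ (by positivity) (by positivity)]
    have : (K:ℝ) ≤ (↑(m + 1 + K) : ℝ) := by push_cast; linarith [Nat.cast_nonneg (α := ℝ) m]
    linarith
  have key : ∀ K : ℕ, mariaF (m + 1) - mariaF (m + 1 + K) ≤
      Real.log (Stirling.stirlingSeq (m + 1)) - Real.log (Stirling.stirlingSeq (m + 1 + K)) := by
    intro K
    have e1 : ∑ k ∈ Finset.range K, (mariaF (m + 1 + k) - mariaF (m + 1 + (k + 1)))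
        = mariaF (m + 1 + 0) - mariaF (m + 1 + K) :=
      Finset.sum_range_sub' (fun k => mariaF (m + 1 + k)) K
    have e2 : ∑ k ∈ Finset.range K, (Real.log (Stirling.stirlingSeq (m + 1 + k))
          - Real.log (Stirling.stirlingSeq (m + 1 + (k + 1))))
        = Real.log (Stirling.stirlingSeq (m + 1 + 0))
          - Real.log (Stirling.stirlingSeq (m + 1 + K)) :=
      Finset.sum_range_sub' (fun k => Real.log (Stirling.stirlingSeq (m + 1 + k))) K
    simp only [Nat.add_zero] at e1 e2
    rw [← e1, ← e2]
    refine Finset.sum_le_sum fun k _ => ?_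
    have h := (mariaF_succ_lt (m + k)).le
    have a1 : m + 1 + k = m + k + 1 := by omega
    have a2 : m + 1 + (k + 1) = m + k + 2 := by omega
    rw [a1, a2]
    exact h
  have limL : Filter.Tendsto (fun K : ℕ => mariaF (m + 1) - mariaF (m + 1 + K)) Filter.atTop
      (nhds (mariaF (m + 1) - 0)) := tendsto_const_nhds.sub tendF
  have limR : Filter.Tendsto (fun K : ℕ => Real.log (Stirling.stirlingSeq (m + 1))
      - Real.log (Stirling.stirlingSeq (m + 1 + K))) Filter.atTop
      (nhds (Real.log (Stirling.stirlingSeq (m + 1)) - Real.log (Real.sqrt π))) :=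
    tendsto_const_nhds.sub tendS
  have := le_of_tendsto_of_tendsto' limL limR key
  simpa using this

/-- **Maria's inequality**: `[12n + 3/(2(2n+1))]⁻¹ < r_n` for every positive integer `n`. -/
theorem maria_inequality (n : ℕ) (hn : 1 ≤ n) :
    (12 * (n : ℝ) + 3 / (2 * (2 * (n : ℝ) + 1)))⁻¹ < stirlingError n := by
  obtain ⟨m, rfl⟩ : ∃ m, n = m + 1 := ⟨n - 1, (Nat.succ_pred_eq_of_pos hn).symm⟩
  have heq : (12 * ((m + 1 : ℕ) : ℝ) + 3 / (2 * (2 * ((m + 1 : ℕ) : ℝ) + 1)))⁻¹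
      = mariaF (m + 1) := by
    unfold mariaF
    push_cast
    have hx : (0:ℝ) ≤ (m:ℝ) := Nat.cast_nonneg m
    rw [eq_div_iff (by positivity), inv_mul_eq_div, div_eq_iff (by positivity)]
    field_simp
    ring
  rw [heq, stirlingError_eq (m + 1) (by omega)]
  have h1 := mariaF_succ_lt m
  have h2 := mariaF_le_err (m + 1)
  have h3 : stirlingError (m + 2) = Real.log (Stirling.stirlingSeq (m + 2))
      - Real.log (Real.sqrt π) := stirlingError_eq (m + 2) (by omega)
  linarith
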